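/- For A = [[1,0],[0,1]] and B = [[0,1],[1,0]], the graph G^k(A,B) is word-representable for every integer k ≥ 0. -/

import Mathlib

/-!
Let `t n` be the parity of the binary digit sum of `n` (the Thue–Morse sequence). Since `A` and `B`
are the identity and the transposition of `Fin 2`, the entry `(i, j)` of `M^k(A, B)` is
`t i xor t j xor (k mod 2)`. So `G^k(A, B)` is obtained from a four-vertex pattern by substitution:
the clique splits by `t j xor (k mod 2)` into two cliques `S₀, S₁`, the independent set splits by
`t i` into two independent sets `I₀, I₁`, and `I_b` is completely joined to `S_a` when `a ≠ b` and
not at all when `a = b`.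

The pattern is represented by the word `I₀ S₁ I₀ S₀ S₁ I₁ S₀ I₁`, in which every class occurs twice.
Replace each occurrence of a class by a fixed listing of its vertices, reversed at the second
occurrence of `I₀` and of `I₁`. Two vertices of different classes then alternate exactly when their
classes do. Two vertices of the same class alternate exactly when its two blocks have the same
orientation, which is the case for the cliques and not for the independent sets.
-/

/-- A word `w` over alphabet `V` represents the graph `G`: every vertex occurs in `w`,
and two distinct vertices are adjacent iff their letters alternate in `w`. -/
def WordRepresents {V : Type*} [DecidableEq V] (w : List V) (G : SimpleGraph V) : Prop :=
  (∀ v : V, v ∈ w) ∧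
  ∀ x y : V, x ≠ y →
    (G.Adj x y ↔ (w.filter (fun z => z == x || z == y)).Chain' (· ≠ ·))

/-- A graph is word-representable if some word represents it. -/
def WordRepresentable {V : Type*} [DecidableEq V] (G : SimpleGraph V) : Prop :=
  ∃ w : List V, WordRepresents w G

/-- The split graph `G(M)` of an `m × n` binary matrix `M`: vertices `Sum.inl j`
(`j : Fin n`) form a clique, vertices `Sum.inr i` (`i : Fin m`) form an independent set,
and `Sum.inr i` is adjacent to `Sum.inl j` iff `M i j = true`. -/
def splitGraph {m n : ℕ} (M : Fin m → Fin n → Bool) : SimpleGraph (Fin n ⊕ Fin m) :=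
  SimpleGraph.fromRel (fun x y =>
    match x, y with
    | Sum.inl _, Sum.inl _ => True
    | Sum.inl j, Sum.inr i => M i j = true
    | _, _ => False)

/-- `morphIter A B k` is the matrix `M^k(A,B)`, obtained from the `1 × 1` matrix `[0]`
by `k` iterations of the 2-dimensional morphism replacing `0` by the block `A`
and `1` by the block `B`. -/
def morphIter {m n : ℕ} (A B : Fin m → Fin n → Bool) :
    (k : ℕ) → Fin (m ^ k) → Fin (n ^ k) → Bool
  | 0, _, _ => false
  | k + 1, i, j =>
    have hm : 0 < m := Nat.pos_of_ne_zero (fun h => by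
      have := i.isLt; simp [h] at this)
    have hn : 0 < n := Nat.pos_of_ne_zero (fun h => by
      have := j.isLt; simp [h] at this)
    have hR : i.val / m < m ^ k :=
      (Nat.div_lt_iff_lt_mul hm).2 (by rw [← pow_succ]; exact i.isLt)
    have hC : j.val / n < n ^ k :=
      (Nat.div_lt_iff_lt_mul hn).2 (by rw [← pow_succ]; exact j.isLt)
    if morphIter A B k ⟨i.val / m, hR⟩ ⟨j.val / n, hC⟩ then
      B ⟨i.val % m, Nat.mod_lt _ hm⟩ ⟨j.val % n, Nat.mod_lt _ hn⟩
    else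
      A ⟨i.val % m, Nat.mod_lt _ hm⟩ ⟨j.val % n, Nat.mod_lt _ hn⟩

/-- `Gk A B k` is the split graph `G^k(A,B) = G(M^k(A,B))`. -/
def Gk {m n : ℕ} (A B : Fin m → Fin n → Bool) (k : ℕ) :
    SimpleGraph (Fin (n ^ k) ⊕ Fin (m ^ k)) :=
  splitGraph (morphIter A B k)

open List

section Alternation

variable {V : Type*}

theorem isChain_ne_map_iff {C : Type*} {f : V → C} {l : List V}
    (hf : Set.InjOn f {x | x ∈ l}) : (l.map f).IsChain (· ≠ ·) ↔ l.IsChain (· ≠ ·) := by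
  rw [isChain_map]
  exact IsChain.iff_of_mem_imp fun a b ha hb => hf.ne_iff ha hb

def orient (o : Bool) (l : List V) : List V := if o then l.reverse else l

theorem isChain_ne_flatMap_orient_iff {a b : V} (hab : a ≠ b) :
    ∀ os : List Bool, (os.flatMap fun o => orient o [a, b]).IsChain (· ≠ ·) ↔ os.IsChain (· = ·)
  | [] => by simp
  | [o] => by cases o <;> simp [orient, hab, hab.symm]
  | o :: o' :: os => by
    have ih := isChain_ne_flatMap_orient_iff hab (o' :: os)
    rw [flatMap_cons] at ih
    cases o <;> cases o' <;> simp_all [orient, hab.symm]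

variable [DecidableEq V]

def Alternate (w : List V) (x y : V) : Prop :=
  (w.filter fun z => z == x || z == y).IsChain (· ≠ ·)

instance (w : List V) (x y : V) : Decidable (Alternate w x y) := by
  unfold Alternate; infer_instance

theorem filter_pair_comm (l : List V) (x y : V) :
    (l.filter fun z => z == x || z == y) = l.filter fun z => z == y || z == x := by
  simp only [Bool.or_comm]

theorem alternate_comm (w : List V) (x y : V) : Alternate w x y ↔ Alternate w y x := by
  rw [Alternate, Alternate, filter_pair_comm]

theorem filter_pair_eq_of_nodup {l : List V} (hl : l.Nodup) {x y : V} (hx : x ∈ l) (hy : y ∈ l)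
    (hxy : x ≠ y) :
    (l.filter fun z => z == x || z == y) = [x, y] ∨
      (l.filter fun z => z == x || z == y) = [y, x] := by
  rw [← perm_pair, perm_ext_iff_of_nodup (hl.filter _) (by simp [hxy])]
  intro z
  simp only [mem_filter, Bool.or_eq_true, beq_iff_eq, mem_cons, not_mem_nil, or_false]
  constructor
  · exact And.right
  · rintro (rfl | rfl) <;> simp [hx, hy]

end Alternation

section Blowup

variable {V C : Type*} [DecidableEq C]

def blowup (order : List V) (f : V → C) (u : List (C × Bool)) : List V :=
  u.flatMap fun p => orient p.2 (order.filter (f · = p.1))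

theorem filter_blowup (order : List V) (f : V → C) (u : List (C × Bool)) (P : V → Bool) :
    (blowup order f u).filter P =
      u.flatMap fun p => orient p.2 ((order.filter P).filter (f · = p.1)) := by
  simp only [blowup, filter_flatMap, orient, apply_ite (filter P), filter_reverse, filter_comm P]

theorem map_flatMap_orient_filter_pair {f : V → C} {x y : V} (hf : f x ≠ f y)
    (u : List (C × Bool)) :
    (u.flatMap fun p => orient p.2 ([x, y].filter (f · = p.1))).map f =
      (u.map Prod.fst).filter fun c => c == f x || c == f y := by
  induction u with
  | nil => rfl
  | cons p u ih =>
    obtain ⟨c, o⟩ := p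
    rw [flatMap_cons, map_append, ih, map_cons, filter_cons]
    by_cases hx : f x = c
    · subst hx
      cases o <;> simp [orient, hf.symm]
    · by_cases hy : f y = c
      · subst hy
        cases o <;> simp [orient, hx]
      · simp [orient, hx, hy, Ne.symm hx, Ne.symm hy]

theorem flatMap_orient_filter_pair {f : V → C} {x y : V} (hf : f x = f y) (u : List (C × Bool)) :
    (u.flatMap fun p => orient p.2 ([x, y].filter (f · = p.1))) =
      ((u.filter (·.1 = f x)).map Prod.snd).flatMap fun o => orient o [x, y] := by
  induction u with
  | nil => rfl
  | cons p u ih =>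
    obtain ⟨c, o⟩ := p
    rw [flatMap_cons, ih, filter_cons]
    by_cases hx : f x = c
    · subst hx
      simp [orient, hf]
    · simp [orient, hx, Ne.symm hx, ← hf]

theorem wordRepresentable_of_blowup [Fintype V] [DecidableEq V] (G : SimpleGraph V)
    (R : C → C → Prop) (f : V → C) (hG : ∀ x y, G.Adj x y ↔ x ≠ y ∧ R (f x) (f y))
    (u : List (C × Bool)) (hcover : ∀ v, f v ∈ u.map Prod.fst)
    (hdiff : ∀ c d, c ≠ d → (R c d ↔ Alternate (u.map Prod.fst) c d))
    (hsame : ∀ c, R c c ↔ ((u.filter (·.1 = c)).map Prod.snd).IsChain (· = ·)) :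
    WordRepresentable G := by
  set order := (Finset.univ : Finset V).toList
  refine ⟨blowup order f u, fun v => ?_, fun x y hxy => ?_⟩
  · obtain ⟨p, hp, hpv⟩ := mem_map.1 (hcover v)
    refine mem_flatMap.2 ⟨p, hp, ?_⟩
    cases p.2 <;> simp [orient, order, hpv]
  show G.Adj x y ↔ Alternate (blowup order f u) x y
  wlog hs : (order.filter fun z => z == x || z == y) = [x, y] generalizing x y
  · rw [G.adj_comm, alternate_comm]
    refine this y x hxy.symm ?_
    rw [filter_pair_comm]
    exact (filter_pair_eq_of_nodup (Finset.nodup_toList _) (by simp) (by simp)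
      hxy).resolve_left hs
  have hW : ∀ z ∈ (blowup order f u).filter fun z => z == x || z == y,
      z ∈ ({x, y} : Set V) := by
    intro z hz
    simpa using (mem_filter.1 hz).2
  rw [filter_blowup, hs] at hW
  rw [hG, Alternate, filter_blowup, hs]
  by_cases hf : f x = f y
  · rw [flatMap_orient_filter_pair hf, isChain_ne_flatMap_orient_iff hxy, ← hsame, hf]
    simp [hxy]
  · rw [← isChain_ne_map_iff ((Set.injOn_pair.2 fun h => absurd h hf).mono hW),
      map_flatMap_orient_filter_pair hf, ← Alternate, ← hdiff _ _ hf]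
    simp [hxy]

end Blowup

def thueMorse (n : ℕ) : Bool := (Nat.digits 2 n).sum.bodd

theorem thueMorse_eq (n : ℕ) : thueMorse n = (decide (n % 2 = 1) ^^ thueMorse (n / 2)) := by
  rcases n.eq_zero_or_pos with rfl | hn
  · rfl
  · rw [thueMorse, Nat.digits_def' one_lt_two hn, sum_cons, Nat.bodd_add, thueMorse,
      Nat.mod_two_of_bodd]
    cases n.bodd <;> rfl

theorem morphIter_id_swap (k : ℕ) (i j : Fin (2 ^ k)) :
    morphIter ![![true, false], ![false, true]] ![![false, true], ![true, false]] k i j =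
      (thueMorse i ^^ thueMorse j ^^ k.bodd) := by
  induction k with
  | zero =>
    rw [Fin.fin_one_eq_zero i, Fin.fin_one_eq_zero j]
    rfl
  | succ k ih =>
    rw [morphIter, ih, thueMorse_eq i, thueMorse_eq j, Nat.bodd_succ]
    rcases Nat.mod_two_eq_zero_or_one i with hi | hi <;>
      rcases Nat.mod_two_eq_zero_or_one j with hj | hj <;>
      simp only [hi, hj] <;>
      cases thueMorse (i / 2) <;> cases thueMorse (j / 2) <;> cases k.bodd <;> rfl

section SplitGraph

variable {m n : ℕ} (M : Fin m → Fin n → Bool)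

@[simp]
theorem splitGraph_adj_inl_inl (j j' : Fin n) :
    (splitGraph M).Adj (.inl j) (.inl j') ↔ j ≠ j' := by
  simp [splitGraph]

@[simp]
theorem splitGraph_adj_inl_inr (j : Fin n) (i : Fin m) :
    (splitGraph M).Adj (.inl j) (.inr i) ↔ M i j = true := by
  simp [splitGraph]

@[simp]
theorem splitGraph_adj_inr_inl (i : Fin m) (j : Fin n) :
    (splitGraph M).Adj (.inr i) (.inl j) ↔ M i j = true := by
  simp [splitGraph]

@[simp]
theorem splitGraph_not_adj_inr_inr (i i' : Fin m) : ¬(splitGraph M).Adj (.inr i) (.inr i') := by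
  simp [splitGraph]

end SplitGraph

def splitPattern : Bool ⊕ Bool → Bool ⊕ Bool → Bool
  | .inl _, .inl _ => true
  | .inl a, .inr b | .inr b, .inl a => a ^^ b
  | .inr _, .inr _ => false

def thueMorseClass (k : ℕ) : Fin (2 ^ k) ⊕ Fin (2 ^ k) → Bool ⊕ Bool :=
  Sum.map (fun j => thueMorse j ^^ k.bodd) (fun i => thueMorse i)

theorem Gk_id_swap_adj_iff (k : ℕ) (x y : Fin (2 ^ k) ⊕ Fin (2 ^ k)) :
    (Gk ![![true, false], ![false, true]] ![![false, true], ![true, false]] k).Adj x y ↔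
      x ≠ y ∧ splitPattern (thueMorseClass k x) (thueMorseClass k y) = true := by
  rcases x with j | i <;> rcases y with j' | i' <;>
    simp [Gk, thueMorseClass, splitPattern, morphIter_id_swap, Bool.xor_comm, Bool.xor_left_comm]

def classWord : List ((Bool ⊕ Bool) × Bool) :=
  [(.inr false, false), (.inl true, false), (.inr false, true), (.inl false, false),
    (.inl true, false), (.inr true, false), (.inl false, false), (.inr true, true)]

theorem mem_classWord (c : Bool ⊕ Bool) : c ∈ classWord.map Prod.fst := by
  rcases c with (_ | _) | (_ | _) <;> simp [classWord]

theorem splitPattern_iff_alternate :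
    ∀ c d : Bool ⊕ Bool, c ≠ d →
      (splitPattern c d = true ↔ Alternate (classWord.map Prod.fst) c d) := by
  decide

theorem splitPattern_self_iff :
    ∀ c : Bool ⊕ Bool,
      splitPattern c c = true ↔ ((classWord.filter (·.1 = c)).map Prod.snd).IsChain (· = ·) := by
  decide

theorem stmt18 :
    ∀ k : ℕ, WordRepresentable
      (Gk ![![true, false], ![false, true]] ![![false, true], ![true, false]] k) := by
  intro k
  exact wordRepresentable_of_blowup _ (fun c d => splitPattern c d = true) (thueMorseClass k)
    (Gk_id_swap_adj_iff k) classWord (fun v => mem_classWord _) splitPattern_iff_alternate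
    splitPattern_self_iff
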